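/- arXiv:2512.09330 — 3 statements merged into one kernel-verified Lean document; each statement's English description precedes it below -/
import Mathlib

section
/- The polynomial P₃(z) = z - z³/3 is injective on the open unit disk, and its derivative P₃'(z) = (1-z)(1+z) has exactly the two zeros z = 1 and z = -1, both lying on the unit circle. -/
lemma P3_deriv (z : ℂ) : deriv (fun z : ℂ => z - z ^ 3 / 3) z = (1 - z) * (1 + z) := by
  have h : HasDerivAt (fun z : ℂ => z - z ^ 3 / 3)
      (1 - (3 : ℕ) * z ^ 2 / 3) z := (hasDerivAt_id z).sub ((hasDerivAt_pow 3 z).div_const 3)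
  rw [h.deriv]; push_cast; ring

theorem P3_univalent_and_critical_points :
    Set.InjOn (fun z : ℂ => z - z ^ 3 / 3) (Metric.ball 0 1) ∧
    (∀ z : ℂ, deriv (fun z : ℂ => z - z ^ 3 / 3) z = (1 - z) * (1 + z)) ∧
    (∀ z : ℂ, deriv (fun z : ℂ => z - z ^ 3 / 3) z = 0 ↔ z = 1 ∨ z = -1) ∧
    ‖(1 : ℂ)‖ = 1 ∧ ‖(-1 : ℂ)‖ = 1 := by
  refine ⟨?_, P3_deriv, ?_, by simp, by simp⟩
  case refine_2 =>
    intro z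
    rw [P3_deriv, mul_eq_zero, sub_eq_zero, add_eq_zero_iff_eq_neg]
    constructor
    · rintro (h | h)
      · exact Or.inl h.symm
      · right; linear_combination h
    · rintro (h | h) <;> simp [h]
  · intro a ha b hb hab
    simp only [Metric.mem_ball, dist_zero_right] at ha hb
    simp only at hab
    have key : (a - b) * (3 - (a ^ 2 + a * b + b ^ 2)) = 0 := by
      have : a - a ^ 3 / 3 = b - b ^ 3 / 3 := hab
      have h3 : (3 : ℂ) ≠ 0 := by norm_num
      field_simp at this
      linear_combination this
    rcases mul_eq_zero.1 key with h | h
    · exact sub_eq_zero.1 h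
    · exfalso
      have habs : ‖a ^ 2 + a * b + b ^ 2‖ < 3 := by
        calc ‖a ^ 2 + a * b + b ^ 2‖
            ≤ ‖a ^ 2‖ + ‖a * b‖ + ‖b ^ 2‖ := by
              refine le_trans (norm_add_le _ _) ?_
              gcongr; exact norm_add_le _ _
          _ = ‖a‖ ^ 2 + ‖a‖ * ‖b‖ + ‖b‖ ^ 2 := by
              simp [map_mul, map_pow]
          _ < 1 + 1 + 1 := by
              have ha' := norm_nonneg a
              have hb' := norm_nonneg b
              have ha2 : ‖a‖ < 1 := ha
              have hb2 : ‖b‖ < 1 := hb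
              gcongr <;> nlinarith
          _ = 3 := by norm_num
      have : a ^ 2 + a * b + b ^ 2 = 3 := by linear_combination -h
      rw [this] at habs
      simp at habs
end

section
/- Let g be analytic on the unit disk, let z₁,…,zₙ be distinct points on the unit circle, and suppose (i) there exist c₀ > 0 and r₀ ∈ (0,1) with |g(z)| ≥ c₀ for r₀ < |z| < 1, and (ii) for each j there exist a sector neighborhood Ω_j of z_j in the disk and C_j > 0 with |g| ≤ C_j on Ω_j, the Ω_j pairwise disjoint. Set f(z) = ∏_{j=1}^n (z - z_j) · g(z). Then for κ > 1, ∫_{-π}^{π} |f(re^{iθ})|^{-κ} dθ ≍ (1-r)^{-(κ-1)} as r → 1⁻, i.e., there exist constants 0 < A ≤ B and r* ∈ (0,1) with A(1-r)^{-(κ-1)} ≤ ∫_{-π}^{π} |f(re^{iθ})|^{-κ} dθ ≤ B(1-r)^{-(κ-1)} for r ∈ (r*, 1). -/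
open Real MeasureTheory

set_option maxHeartbeats 1000000

private theorem G1' (r u : ℝ) :
    ‖(r:ℂ) * Complex.exp (u * Complex.I) - 1‖ ^ 2
      = (1-r)^2 + 2*r*(1 - Real.cos u) := by
  rw [← Complex.normSq_eq_norm_sq]
  simp [Complex.normSq_apply, Complex.exp_mul_I, Complex.add_re, Complex.mul_re, Complex.mul_im,
    Complex.cos_ofReal_re, Complex.sin_ofReal_re]
  ring_nf
  nlinarith [Real.sin_sq_add_cos_sq u]

private theorem G2' (r θ α : ℝ) :
    ‖(r:ℂ) * Complex.exp (θ * Complex.I) - Complex.exp (α * Complex.I)‖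
      = ‖(r:ℂ) * Complex.exp ((θ - α) * Complex.I) - 1‖ := by
  have h : (r:ℂ) * Complex.exp (θ * Complex.I) - Complex.exp (α * Complex.I)
      = Complex.exp (α * Complex.I) * ((r:ℂ) * Complex.exp ((θ - α) * Complex.I) - 1) := by
    rw [mul_sub, mul_one, mul_comm (Complex.exp (α * Complex.I)), mul_assoc, ← Complex.exp_add]
    ring_nf
  rw [h, norm_mul, Complex.norm_exp]
  simp

private theorem G3a' (r u : ℝ) (hr0 : 0 ≤ r) (hr : r ≤ 1) :
    1 - r ≤ ‖(r:ℂ) * Complex.exp (u * Complex.I) - 1‖ := by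
  have h := G1' r u
  have h1 : Real.cos u ≤ 1 := Real.cos_le_one u
  have h2 : (0:ℝ) ≤ ‖(r:ℂ) * Complex.exp (u * Complex.I) - 1‖ := by positivity
  nlinarith [sq_nonneg (‖(r:ℂ) * Complex.exp (u * Complex.I) - 1‖ - (1-r))]

private theorem G3b' (r u : ℝ) (hr : 1/2 ≤ r) (hu : |u| ≤ 2*π) :
    π⁻¹ * min |u| (2*π - |u|) ≤ ‖(r:ℂ) * Complex.exp (u * Complex.I) - 1‖ := by
  have hπ := Real.pi_pos
  set m := min |u| (2*π - |u|) with hm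
  have hm0 : 0 ≤ m := le_min (abs_nonneg u) (by linarith)
  have hmπ : m ≤ π := by
    rcases le_or_gt |u| π with h | h
    · exact (min_le_left _ _).trans h
    · exact (min_le_right _ _).trans (by linarith)
  have hcos : Real.cos m = Real.cos u := by
    rcases min_cases |u| (2*π - |u|) with ⟨h1, _⟩ | ⟨h1, _⟩
    · rw [hm, h1, Real.cos_abs]
    · rw [hm, h1]
      rw [show 2*π - |u| = -(|u|) + 2*π by ring, Real.cos_add_two_pi, Real.cos_neg, Real.cos_abs]
  have hkey : Real.cos m ≤ 1 - 2/π^2 * m^2 :=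
    Real.cos_le_one_sub_mul_cos_sq (by rwa [abs_of_nonneg hm0])
  clear_value m
  have h := G1' r u
  have h2 : (0:ℝ) ≤ ‖(r:ℂ) * Complex.exp (u * Complex.I) - 1‖ := by positivity
  have hsq : (π⁻¹ * m)^2 ≤ ‖(r:ℂ) * Complex.exp (u * Complex.I) - 1‖ ^ 2 := by
    have hπ2 : (0:ℝ) < π^2 := by positivity
    have e1 : (π⁻¹ * m)^2 = m^2 / π^2 := by field_simp
    rw [e1, h, ← hcos]
    have h3 : 1 - Real.cos m ≥ 2/π^2 * m^2 := by linarith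
    have h4 : Real.cos m ≤ 1 := Real.cos_le_one m
    have e : 2/π^2*m^2 = 2*(m^2/π^2) := by ring
    rw [e] at h3
    have hX : 0 ≤ m^2/π^2 := by positivity
    set X := m^2/π^2
    nlinarith [sq_nonneg (1-r),
      mul_nonneg (by linarith : (0:ℝ) ≤ 2*r-1) (by linarith : (0:ℝ) ≤ 1 - Real.cos m)]
  exact le_of_pow_le_pow_left₀ (n := 2) two_ne_zero h2 hsq

private theorem G4' (r u : ℝ) (hr : 0 ≤ r) (hr1 : r ≤ 1) :
    ‖(r:ℂ) * Complex.exp (u * Complex.I) - 1‖ ≤ (1 - r) + |u| := by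
  have h := G1' r u
  have hcos : 1 - u^2/2 ≤ Real.cos u := Real.one_sub_sq_div_two_le_cos
  have h2 : (0:ℝ) ≤ ‖(r:ℂ) * Complex.exp (u * Complex.I) - 1‖ := by positivity
  have hb : (0:ℝ) ≤ (1-r) + |u| := by have := abs_nonneg u; linarith
  apply le_of_pow_le_pow_left₀ (n := 2) two_ne_zero hb
  have h5 : ((1-r) + |u|)^2 ≥ (1-r)^2 + u^2 := by nlinarith [abs_nonneg u, sq_abs u]
  have h6 : Real.cos u ≤ 1 := Real.cos_le_one u
  nlinarith

private theorem Garg' (r θ : ℝ) (hr : 0 < r) (h1 : -π < θ) (h2 : θ ≤ π) :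
    Complex.arg ((r:ℂ) * Complex.exp (θ * Complex.I)) = θ := by
  rw [Complex.exp_mul_I]
  rw [show ((r:ℂ) * (Complex.cos θ + Complex.sin θ * Complex.I))
      = (r:ℝ) * (Complex.cos θ + Complex.sin θ * Complex.I) by norm_cast]
  rw [Complex.arg_real_mul _ hr]
  exact Complex.arg_cos_add_sin_mul_I ⟨h1, h2⟩

private theorem Gz' (w : ℂ) (h : ‖w‖ = 1) :
    w = Complex.exp (Complex.arg w * Complex.I) := by
  conv_lhs => rw [← Complex.norm_mul_exp_arg_mul_I w]
  rw [h]; simp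

private theorem Lcont' (κ : ℝ) (f : ℝ → ℝ) (hf : Continuous f) (hpos : ∀ x, 0 < f x) :
    Continuous fun θ => (f θ) ^ (-κ) := by
  rw [continuous_iff_continuousAt]
  intro x
  exact hf.continuousAt.rpow_const (Or.inl (hpos x).ne')

private theorem L3x (κ ε c L : ℝ) (hκ : 1 < κ) (hε : 0 < ε) (hc : 0 < c) (hL : 0 ≤ L) :
    ∫ u in (0:ℝ)..L, (ε + c*u) ^ (-κ)
      = (ε ^ (1-κ) - (ε + c*L) ^ (1-κ)) / (c*(κ-1)) := by
  have hpos : ∀ u ∈ Set.uIcc (0:ℝ) L, 0 < ε + c * u := by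
    intro u hu
    rw [Set.uIcc_of_le hL] at hu
    nlinarith [hu.1]
  have hderiv : ∀ u ∈ Set.uIcc (0:ℝ) L,
      HasDerivAt (fun t => -(ε + c*t) ^ (1-κ) / (c*(κ-1))) ((ε + c*u) ^ (-κ)) u := by
    intro u hu
    have h1 : HasDerivAt (fun t => ε + c*t) c u := by
      simpa using ((hasDerivAt_id u).const_mul c).const_add ε
    have h2 : HasDerivAt (fun t => (ε + c*t) ^ (1-κ))
        ((1-κ) * (ε + c*u) ^ (1-κ-1) * c) u :=
      (h1.rpow_const (p := 1-κ) (Or.inl (hpos u hu).ne')).congr_deriv (by ring)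
    have h3 := (h2.neg).div_const (c*(κ-1))
    have hne : c*(κ-1) ≠ 0 := by nlinarith
    refine h3.congr_deriv ?_
    rw [show (1-κ-1) = -κ by ring]
    have hk1 : κ - 1 ≠ 0 := by linarith
    field_simp
    ring
  have hcont : ContinuousOn (fun u => (ε + c*u) ^ (-κ)) (Set.uIcc (0:ℝ) L) := by
    apply ContinuousOn.rpow_const
    · fun_prop
    · intro u hu; exact Or.inl (hpos u hu).ne'
  rw [intervalIntegral.integral_eq_sub_of_hasDerivAt hderiv (hcont.intervalIntegrable)]
  ring

private theorem L3one (κ ε L : ℝ) (hκ : 1 < κ) (hε : 0 < ε) (hL : 0 ≤ L) :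
    ∫ u in (0:ℝ)..L, (ε + u) ^ (-κ)
      = (ε ^ (1-κ) - (ε + L) ^ (1-κ)) / (κ-1) := by
  have := L3x κ ε 1 L hκ hε one_pos hL
  simp only [one_mul] at this
  rw [this]

private theorem L3' (κ ε c L : ℝ) (hκ : 1 < κ) (hε : 0 < ε) (hc : 0 < c) (hL : 0 ≤ L) :
    ∫ u in (0:ℝ)..L, (ε + c*u) ^ (-κ) ≤ ε ^ (1-κ) / (c*(κ-1)) := by
  rw [L3x κ ε c L hκ hε hc hL]
  have hden : 0 < c*(κ-1) := by nlinarith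
  have h0 : 0 ≤ (ε + c*L) ^ (1-κ) := Real.rpow_nonneg (by nlinarith) _
  gcongr
  linarith

private theorem L4' (κ ε c a : ℝ) (hκ : 1 < κ) (hε : 0 < ε) (hc : 0 < c) :
    ∫ θ in (-π)..π, (ε + c*|θ - a|) ^ (-κ) ≤ 2 * ε ^ (1-κ) / (c*(κ-1)) := by
  set a' : ℝ := max (-π) (min a π) with ha'
  have hπ := Real.pi_pos
  have h1 : -π ≤ a' := le_max_left _ _
  have h2 : a' ≤ π := max_le (by linarith) (min_le_right _ _)
  have key1 : ∀ θ ∈ Set.Icc a' π, θ - a' ≤ |θ - a| := by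
    intro θ hθ
    rcases le_or_gt a π with h | h
    · rcases le_or_gt (-π) a with h' | h'
      · have : a' = a := by rw [ha', min_eq_left h, max_eq_right h']
        rw [this]; exact le_abs_self _
      · have : a' = -π := by rw [ha', min_eq_left h, max_eq_left (le_of_lt h')]
        rw [this] at hθ ⊢
        linarith [le_abs_self (θ - a)]
    · have : a' = π := by rw [ha', min_eq_right (le_of_lt h), max_eq_right (by linarith)]
      rw [this] at hθ ⊢
      have : θ = π := le_antisymm hθ.2 hθ.1
      rw [this]; simp [abs_nonneg]
  have key2 : ∀ θ ∈ Set.Icc (-π) a', a' - θ ≤ |θ - a| := by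
    intro θ hθ
    rcases le_or_gt (-π) a with h' | h'
    · rcases le_or_gt a π with h | h
      · have : a' = a := by rw [ha', min_eq_left h, max_eq_right h']
        rw [this, abs_sub_comm]; exact le_abs_self _
      · have : a' = π := by rw [ha', min_eq_right (le_of_lt h), max_eq_right (by linarith)]
        rw [this] at hθ ⊢
        rw [abs_sub_comm]
        linarith [le_abs_self (a - θ)]
    · have : a' = -π := by rw [ha', min_eq_left (by linarith), max_eq_left (le_of_lt h')]
      rw [this] at hθ ⊢
      have : θ = -π := le_antisymm hθ.2 hθ.1
      rw [this]; simp [abs_nonneg]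
  have hcont : Continuous fun θ : ℝ => (ε + c*|θ - a|) ^ (-κ) :=
    Lcont' κ _ (by fun_prop) (fun x => by positivity)
  have split : (∫ θ in (-π)..π, (ε + c*|θ - a|) ^ (-κ))
      = (∫ θ in (-π)..a', (ε + c*|θ - a|) ^ (-κ)) + ∫ θ in a'..π, (ε + c*|θ - a|) ^ (-κ) := by
    rw [intervalIntegral.integral_add_adjacent_intervals] <;>
      exact hcont.continuousOn.intervalIntegrable
  rw [split]
  have contR : Continuous fun θ : ℝ => (ε + c*|θ - a'|) ^ (-κ) :=
    Lcont' κ _ (by fun_prop) (fun x => by positivity)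
  have hR : (∫ θ in a'..π, (ε + c*|θ - a|) ^ (-κ)) ≤ ε ^ (1-κ) / (c*(κ-1)) := by
    have mono : (∫ θ in a'..π, (ε + c*|θ - a|) ^ (-κ))
        ≤ ∫ θ in a'..π, (ε + c*|θ - a'|) ^ (-κ) := by
      apply intervalIntegral.integral_mono_on h2
        hcont.continuousOn.intervalIntegrable contR.continuousOn.intervalIntegrable
      intro θ hθ
      have habs : |θ - a'| = θ - a' := abs_of_nonneg (by linarith [hθ.1])
      rw [habs]
      apply Real.rpow_le_rpow_of_nonpos
      · have := key1 θ hθ; have := hθ.1; nlinarith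
      · have := key1 θ hθ; nlinarith
      · linarith
    have e1 : (∫ θ in a'..π, (ε + c*|θ - a'|) ^ (-κ))
        = ∫ θ in a'..π, (ε + c*(θ - a')) ^ (-κ) := by
      apply intervalIntegral.integral_congr
      intro θ hθ
      rw [Set.uIcc_of_le h2] at hθ
      show (ε + c * |θ - a'|) ^ (-κ) = (ε + c * (θ - a')) ^ (-κ)
      rw [abs_of_nonneg (by linarith [hθ.1])]
    have comp : (∫ θ in a'..π, (ε + c*(θ - a')) ^ (-κ))
        = ∫ u in (0:ℝ)..(π - a'), (ε + c*u) ^ (-κ) := by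
      rw [intervalIntegral.integral_comp_sub_right (fun u => (ε + c*u) ^ (-κ)) a', sub_self]
    rw [e1] at mono
    rw [comp] at mono
    exact mono.trans (L3' κ ε c (π - a') hκ hε hc (by linarith))
  have hL : (∫ θ in (-π)..a', (ε + c*|θ - a|) ^ (-κ)) ≤ ε ^ (1-κ) / (c*(κ-1)) := by
    have mono : (∫ θ in (-π)..a', (ε + c*|θ - a|) ^ (-κ))
        ≤ ∫ θ in (-π)..a', (ε + c*|θ - a'|) ^ (-κ) := by
      apply intervalIntegral.integral_mono_on h1
        hcont.continuousOn.intervalIntegrable contR.continuousOn.intervalIntegrable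
      intro θ hθ
      have habs : |θ - a'| = a' - θ := by
        rw [abs_sub_comm]; exact abs_of_nonneg (by linarith [hθ.2])
      rw [habs]
      apply Real.rpow_le_rpow_of_nonpos
      · have := key2 θ hθ; have := hθ.2; nlinarith
      · have := key2 θ hθ; nlinarith
      · linarith
    have e1 : (∫ θ in (-π)..a', (ε + c*|θ - a'|) ^ (-κ))
        = ∫ θ in (-π)..a', (ε + c*(a' - θ)) ^ (-κ) := by
      apply intervalIntegral.integral_congr
      intro θ hθ
      rw [Set.uIcc_of_le h1] at hθ
      show (ε + c * |θ - a'|) ^ (-κ) = (ε + c * (a' - θ)) ^ (-κ)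
      rw [abs_sub_comm, abs_of_nonneg (by linarith [hθ.2])]
    have comp : (∫ θ in (-π)..a', (ε + c*(a' - θ)) ^ (-κ))
        = ∫ u in (0:ℝ)..(a' + π), (ε + c*u) ^ (-κ) := by
      rw [intervalIntegral.integral_comp_sub_left (fun u => (ε + c*u) ^ (-κ)) a', sub_self]
      norm_num
    rw [e1] at mono
    rw [comp] at mono
    exact mono.trans (L3' κ ε c (a' + π) hκ hε hc (by linarith))
  have : 0 < c * (κ - 1) := by nlinarith
  rw [show 2 * ε ^ (1-κ) / (c*(κ-1)) = ε ^ (1-κ)/(c*(κ-1)) + ε ^ (1-κ)/(c*(κ-1)) by ring]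
  exact add_le_add hL hR

theorem integral_inv_rpow_asymp_of_zeros_on_circle
    (g : ℂ → ℂ) (hg : AnalyticOn ℂ g (Metric.ball 0 1))
    (n : ℕ) (hn : 0 < n) (z : Fin n → ℂ)
    (hdist : Function.Injective z) (hcirc : ∀ j, ‖z j‖ = 1)
    -- (i) lower bound for g near the boundary
    (c₀ r₀ : ℝ) (hc₀ : 0 < c₀) (hr₀ : r₀ ∈ Set.Ioo (0 : ℝ) 1)
    (hlow : ∀ w : ℂ, r₀ < ‖w‖ → ‖w‖ < 1 → c₀ ≤ ‖g w‖)
    -- (ii) sector neighborhoods with upper bounds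
    (rj ϑ C : Fin n → ℝ) (hrj : ∀ j, rj j ∈ Set.Ioo (0 : ℝ) 1)
    (hϑ : ∀ j, 0 < ϑ j) (hC : ∀ j, 0 < C j)
    (hup : ∀ j, ∀ w : ℂ,
        w ∈ {w : ℂ | rj j < ‖w‖ ∧ ‖w‖ < 1 ∧
              |Complex.arg w - Complex.arg (z j)| < ϑ j} → ‖g w‖ ≤ C j)
    (hdisj : ∀ j k, j ≠ k →
        Disjoint
          {w : ℂ | rj j < ‖w‖ ∧ ‖w‖ < 1 ∧
              |Complex.arg w - Complex.arg (z j)| < ϑ j}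
          {w : ℂ | rj k < ‖w‖ ∧ ‖w‖ < 1 ∧
              |Complex.arg w - Complex.arg (z k)| < ϑ k})
    (κ : ℝ) (hκ : 1 < κ) :
    ∃ A B rstar : ℝ, 0 < A ∧ A ≤ B ∧ rstar ∈ Set.Ioo (0 : ℝ) 1 ∧
      ∀ r ∈ Set.Ioo rstar 1,
        A * (1 - r) ^ (-(κ - 1)) ≤
            (∫ θ in (-π)..π,
              ‖(∏ j, ((r : ℂ) * Complex.exp (θ * Complex.I) - z j)) *
                g (r * Complex.exp (θ * Complex.I))‖ ^ (-κ)) ∧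
        (∫ θ in (-π)..π,
              ‖(∏ j, ((r : ℂ) * Complex.exp (θ * Complex.I) - z j)) *
                g (r * Complex.exp (θ * Complex.I))‖ ^ (-κ)) ≤
            B * (1 - r) ^ (-(κ - 1)) := by
  classical
  have hπ := Real.pi_pos
  have hκ0 : 0 < κ - 1 := by linarith
  set j₀ : Fin n := ⟨0, hn⟩ with hj₀
  set α : Fin n → ℝ := fun j => Complex.arg (z j) with hα
  have hα1 : ∀ j, -π < α j := fun j => Complex.neg_pi_lt_arg _
  have hα2 : ∀ j, α j ≤ π := fun j => Complex.arg_le_pi _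
  have hz_eq : ∀ j, z j = Complex.exp ((α j : ℂ) * Complex.I) := by
    intro j
    conv_lhs => rw [← Complex.norm_mul_exp_arg_mul_I (z j)]
    rw [hcirc j]; simp; rfl
  -- separation constant δ
  obtain ⟨δ, hδ0, hδ⟩ : ∃ δ : ℝ, 0 < δ ∧ ∀ j k, j ≠ k → 2*δ ≤ ‖z j - z k‖ := by
    set s : Finset (Fin n × Fin n) := Finset.univ.filter (fun p => p.1 ≠ p.2) with hs
    by_cases hne : s.Nonempty
    · refine ⟨(s.inf' hne fun p => ‖z p.1 - z p.2‖)/2, ?_, ?_⟩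
      · have hpos : ∀ p ∈ s, 0 < ‖z p.1 - z p.2‖ := by
          intro p hp
          have hne2 : z p.1 ≠ z p.2 := fun h => (Finset.mem_filter.1 hp).2 (hdist h)
          simpa [norm_pos_iff, sub_ne_zero] using hne2
        have := (Finset.lt_inf'_iff hne).2 hpos
        linarith
      · intro j k hjk
        have hmem : (j, k) ∈ s := by simp [hs, hjk]
        have := Finset.inf'_le (fun p => ‖z p.1 - z p.2‖) hmem
        linarith
    · refine ⟨1, one_pos, fun j k hjk => absurd ⟨(j,k), by simp [hs, hjk]⟩ hne⟩
  -- half-angle ψ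
  set ψ : ℝ := min (ϑ j₀) π / 2 with hψ
  have hψ0 : 0 < ψ := by
    have := hϑ j₀; have : 0 < min (ϑ j₀) π := lt_min (hϑ j₀) hπ
    rw [hψ]; linarith
  have hψπ : ψ ≤ π/2 := by
    have := min_le_right (ϑ j₀) π
    rw [hψ]; linarith
  have hψϑ : ψ < ϑ j₀ := by
    have h1 : min (ϑ j₀) π ≤ ϑ j₀ := min_le_left _ _
    have h2 : 0 < min (ϑ j₀) π := lt_min (hϑ j₀) hπ
    rw [hψ]; linarith
  -- threshold for ε
  have hp2 : (0:ℝ) < (2:ℝ) ^ (-(κ-1)⁻¹) := Real.rpow_pos_of_pos two_pos _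
  set εm : ℝ := min (ψ * (2:ℝ) ^ (-(κ-1)⁻¹)) (1/2) with hεm
  have hεm0 : 0 < εm := lt_min (mul_pos hψ0 hp2) (by norm_num)
  have hεm12 : εm ≤ 1/2 := min_le_right _ _
  -- rstar
  set rstar : ℝ := max (max r₀ (rj j₀)) (max (1/2) (1 - εm)) with hrstar
  have hrs0 : 0 < rstar := lt_of_lt_of_le (by norm_num) ((le_max_left _ _).trans (le_max_right _ _))
  have hrs1 : rstar < 1 := by
    apply max_lt (max_lt hr₀.2 (hrj j₀).2) (max_lt (by norm_num) (by linarith))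
  -- constants
  set cA : ℝ := (C j₀ * 2^(n-1) : ℝ) ^ (-κ) with hcA
  have hcA0 : 0 < cA := Real.rpow_pos_of_pos (mul_pos (hC j₀) (by positivity)) _
  set A : ℝ := cA / (2*(κ-1)) with hA
  have hA0 : 0 < A := div_pos hcA0 (by linarith)
  set Kc : ℝ := (c₀ * δ^(n-1)) ^ (-κ) * 2 ^ κ with hKc
  have hKc0 : 0 < Kc := by
    have h1 : (0:ℝ) < (c₀ * δ^(n-1)) ^ (-κ) :=
      Real.rpow_pos_of_pos (mul_pos hc₀ (pow_pos hδ0 _)) _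
    have h2 : (0:ℝ) < (2:ℝ) ^ κ := Real.rpow_pos_of_pos two_pos _
    exact mul_pos h1 h2
  set B0 : ℝ := Kc * (n * (3 * (2 / (π⁻¹*(κ-1))))) with hB0
  set B : ℝ := max A B0 with hB
  refine ⟨A, B, rstar, hA0, le_max_left _ _, ⟨hrs0, hrs1⟩, ?_⟩
  rintro r ⟨hrl, hr1⟩
  have hr0r : r₀ < r := lt_of_le_of_lt ((le_max_left _ _).trans (le_max_left _ _)) hrl
  have hrjr : rj j₀ < r := lt_of_le_of_lt ((le_max_right _ _).trans (le_max_left _ _)) hrl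
  have hr12 : 1/2 < r := lt_of_le_of_lt ((le_max_left _ _).trans (le_max_right _ _)) hrl
  have hrεm : 1 - εm < r := lt_of_le_of_lt ((le_max_right _ _).trans (le_max_right _ _)) hrl
  have hr0 : 0 < r := by linarith
  set ε : ℝ := 1 - r with hε
  have hε0 : 0 < ε := by rw [hε]; linarith
  have hεεm : ε < εm := by rw [hε]; linarith
  -- basic facts about the circle of radius r
  have hw_abs : ∀ θ : ℝ, ‖(r:ℂ) * Complex.exp ((θ:ℂ) * Complex.I)‖ = r := by
    intro θ
    rw [norm_mul, Complex.norm_exp]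
    simp [abs_of_pos hr0]
  have hgw : ∀ θ : ℝ, c₀ ≤ ‖g ((r:ℂ) * Complex.exp ((θ:ℂ) * Complex.I))‖ := by
    intro θ
    exact hlow _ (by rw [hw_abs]; exact hr0r) (by rw [hw_abs]; exact hr1)
  have hd_pos : ∀ (θ : ℝ) (j : Fin n),
      0 < ‖(r:ℂ) * Complex.exp ((θ:ℂ) * Complex.I) - z j‖ := by
    intro θ j
    rw [norm_pos_iff, sub_ne_zero]
    intro h
    rw [← hw_abs θ, h, hcirc j] at hr1
    exact absurd hr1 (lt_irrefl 1)
  -- the norm as a product of absolute values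
  have hNeq : ∀ θ : ℝ,
      ‖(∏ j, ((r : ℂ) * Complex.exp ((θ:ℂ) * Complex.I) - z j)) *
        g ((r:ℂ) * Complex.exp ((θ:ℂ) * Complex.I))‖
      = (∏ j, ‖(r:ℂ) * Complex.exp ((θ:ℂ) * Complex.I) - z j‖)
          * ‖g ((r:ℂ) * Complex.exp ((θ:ℂ) * Complex.I))‖ := by
    intro θ
    rw [norm_mul, norm_prod]
  have hN_pos : ∀ θ : ℝ,
      0 < (∏ j, ‖(r:ℂ) * Complex.exp ((θ:ℂ) * Complex.I) - z j‖)
          * ‖g ((r:ℂ) * Complex.exp ((θ:ℂ) * Complex.I))‖ := by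
    intro θ
    apply mul_pos (Finset.prod_pos fun j _ => hd_pos θ j) (lt_of_lt_of_le hc₀ (hgw θ))
  -- continuity of the integrand
  have hwc : Continuous fun θ : ℝ => (r:ℂ) * Complex.exp ((θ:ℂ) * Complex.I) := by fun_prop
  have hgc : Continuous fun θ : ℝ => g ((r:ℂ) * Complex.exp ((θ:ℂ) * Complex.I)) := by
    apply hg.continuousOn.comp_continuous hwc
    intro θ
    rw [Metric.mem_ball, dist_zero_right, hw_abs]
    exact hr1
  have hNc : Continuous fun θ : ℝ =>
      (∏ j, ‖(r:ℂ) * Complex.exp ((θ:ℂ) * Complex.I) - z j‖)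
        * ‖(g ((r:ℂ) * Complex.exp ((θ:ℂ) * Complex.I)))‖ := by
    apply Continuous.mul
    · apply continuous_finset_prod
      intro j _
      exact continuous_norm.comp ((hwc.sub continuous_const))
    · exact continuous_norm.comp hgc
  have hFc : Continuous fun θ : ℝ =>
      ‖(∏ j, ((r : ℂ) * Complex.exp ((θ:ℂ) * Complex.I) - z j)) *
        g ((r:ℂ) * Complex.exp ((θ:ℂ) * Complex.I))‖ ^ (-κ) := by
    apply Lcont' κ _ _ _
    · simp only [hNeq]
      exact hNc
    · intro θ; rw [hNeq]; exact hN_pos θ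
  have hFint : IntervalIntegrable (fun θ : ℝ =>
      ‖(∏ j, ((r : ℂ) * Complex.exp ((θ:ℂ) * Complex.I) - z j)) *
        g ((r:ℂ) * Complex.exp ((θ:ℂ) * Complex.I))‖ ^ (-κ)) volume (-π) π :=
    hFc.continuousOn.intervalIntegrable
  constructor
  · -- lower bound
    rw [show -(κ-1) = 1-κ by ring]
    set F : ℝ → ℝ := fun θ =>
      ‖(∏ j, ((r : ℂ) * Complex.exp ((θ:ℂ) * Complex.I) - z j)) *
        g ((r:ℂ) * Complex.exp ((θ:ℂ) * Complex.I))‖ ^ (-κ) with hF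
    have hF0 : ∀ θ : ℝ, 0 ≤ F θ := fun θ => Real.rpow_nonneg (norm_nonneg _) _
    have hFint' : ∀ a b : ℝ, IntervalIntegrable F volume a b := fun a b =>
      hFc.continuousOn.intervalIntegrable
    have hwin : ∀ a b : ℝ, -π < a → b ≤ π → a ≤ b →
        (∀ θ ∈ Set.Icc a b, |θ - α j₀| ≤ ψ) →
        ∀ θ ∈ Set.Icc a b, cA * (ε + |θ - α j₀|) ^ (-κ) ≤ F θ := by
      intro a b ha hb hab hwψ θ hθ
      have hθ1 : -π < θ := lt_of_lt_of_le ha hθ.1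
      have hθ2 : θ ≤ π := le_trans hθ.2 hb
      have harg : Complex.arg ((r:ℂ) * Complex.exp ((θ:ℂ) * Complex.I)) = θ :=
        Garg' r θ hr0 hθ1 hθ2
      have hsec : ‖g ((r:ℂ) * Complex.exp ((θ:ℂ) * Complex.I))‖ ≤ C j₀ := by
        apply hup j₀
        refine ⟨?_, ?_, ?_⟩
        · rw [hw_abs]; exact hrjr
        · rw [hw_abs]; exact hr1
        · rw [harg]
          calc |θ - Complex.arg (z j₀)| = |θ - α j₀| := by rw [hα]
          _ ≤ ψ := hwψ θ hθ
          _ < ϑ j₀ := hψϑ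
      have hdub : ‖(r:ℂ) * Complex.exp ((θ:ℂ) * Complex.I) - z j₀‖
          ≤ ε + |θ - α j₀| := by
        have hrot : ‖(r:ℂ) * Complex.exp ((θ:ℂ) * Complex.I) - z j₀‖
            = ‖(r:ℂ) * Complex.exp ((↑(θ - α j₀):ℂ) * Complex.I) - 1‖ := by
          rw [hz_eq j₀, G2' r θ (α j₀)]
          norm_cast
        rw [hrot, hε]
        exact G4' r (θ - α j₀) hr0.le hr1.le
      have hd2 : ∀ k : Fin n,
          ‖(r:ℂ) * Complex.exp ((θ:ℂ) * Complex.I) - z k‖ ≤ 2 := by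
        intro k
        have h1 : ‖(r:ℂ) * Complex.exp ((θ:ℂ) * Complex.I) - z k‖
            ≤ ‖(r:ℂ) * Complex.exp ((θ:ℂ) * Complex.I)‖ + ‖z k‖ := by
          simpa [sub_eq_add_neg] using
            norm_add_le ((r:ℂ) * Complex.exp ((θ:ℂ) * Complex.I)) (-(z k))
        rw [hw_abs, hcirc] at h1
        linarith
      have hprodup : (∏ j, ‖(r:ℂ) * Complex.exp ((θ:ℂ) * Complex.I) - z j‖)
          ≤ ‖(r:ℂ) * Complex.exp ((θ:ℂ) * Complex.I) - z j₀‖ * 2^(n-1) := by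
        rw [← Finset.mul_prod_erase Finset.univ _ (Finset.mem_univ j₀)]
        apply mul_le_mul_of_nonneg_left _ (hd_pos θ j₀).le
        calc (∏ k ∈ Finset.univ.erase j₀,
              ‖(r:ℂ) * Complex.exp ((θ:ℂ) * Complex.I) - z k‖)
            ≤ ∏ _k ∈ Finset.univ.erase j₀, (2:ℝ) :=
              Finset.prod_le_prod (fun k _ => (hd_pos θ k).le) (fun k _ => hd2 k)
        _ = 2^(n-1) := by
            rw [Finset.prod_const, Finset.card_erase_of_mem (Finset.mem_univ _),
              Finset.card_univ, Fintype.card_fin]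
      have habs0 : (0:ℝ) ≤ ε + |θ - α j₀| := by positivity
      have hNup : (∏ j, ‖(r:ℂ) * Complex.exp ((θ:ℂ) * Complex.I) - z j‖)
            * ‖g ((r:ℂ) * Complex.exp ((θ:ℂ) * Complex.I))‖
          ≤ (C j₀ * 2^(n-1)) * (ε + |θ - α j₀|) := by
        calc (∏ j, ‖(r:ℂ) * Complex.exp ((θ:ℂ) * Complex.I) - z j‖)
              * ‖g ((r:ℂ) * Complex.exp ((θ:ℂ) * Complex.I))‖
            ≤ (‖(r:ℂ) * Complex.exp ((θ:ℂ) * Complex.I) - z j₀‖ * 2^(n-1))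
                * C j₀ :=
              mul_le_mul hprodup hsec (norm_nonneg _)
                (mul_nonneg (hd_pos θ j₀).le (by positivity))
        _ ≤ ((ε + |θ - α j₀|) * 2^(n-1)) * C j₀ := by
            have h2n : (0:ℝ) ≤ (2:ℝ)^(n-1) := by positivity
            exact mul_le_mul_of_nonneg_right
              (mul_le_mul_of_nonneg_right hdub h2n) (hC j₀).le
        _ = (C j₀ * 2^(n-1)) * (ε + |θ - α j₀|) := by ring
      have hgoal := Real.rpow_le_rpow_of_nonpos (hN_pos θ) hNup (by linarith : -κ ≤ 0)
      rw [Real.mul_rpow (mul_pos (hC j₀) (by positivity : (0:ℝ) < 2^(n-1))).le habs0] at hgoal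
      rw [hF]
      dsimp only
      rw [hNeq θ, hcA]
      exact hgoal
    have hIcc : ∀ a b : ℝ, -π ≤ a → a ≤ b → b ≤ π →
        (∫ θ in a..b, F θ) ≤ ∫ θ in (-π)..π, F θ := by
      intro a b ha hab hb
      have e1 : (∫ θ in a..b, F θ) + (∫ θ in b..π, F θ) = ∫ θ in a..π, F θ :=
        intervalIntegral.integral_add_adjacent_intervals (hFint' a b) (hFint' b π)
      have e2 : (∫ θ in (-π)..a, F θ) + (∫ θ in a..π, F θ) = ∫ θ in (-π)..π, F θ :=
        intervalIntegral.integral_add_adjacent_intervals (hFint' (-π) a) (hFint' a π)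
      have n1 : 0 ≤ ∫ θ in b..π, F θ :=
        intervalIntegral.integral_nonneg hb (fun u _ => hF0 u)
      have n2 : 0 ≤ ∫ θ in (-π)..a, F θ :=
        intervalIntegral.integral_nonneg ha (fun u _ => hF0 u)
      linarith
    have hconta : Continuous fun θ : ℝ => cA * (ε + |θ - α j₀|) ^ (-κ) :=
      continuous_const.mul (Lcont' κ _ (by fun_prop) (fun x => by positivity))
    -- numeric bound
    have hnum : A * ε^(1-κ) ≤ cA * ((ε^(1-κ) - (ε+ψ)^(1-κ))/(κ-1)) := by
      have h1 : (ε+ψ)^(1-κ) ≤ ψ^(1-κ) :=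
        Real.rpow_le_rpow_of_nonpos hψ0 (by linarith) (by linarith)
      have hεb : ε ≤ ψ * 2^(-(κ-1)⁻¹) := le_of_lt (lt_of_lt_of_le hεεm (min_le_left _ _))
      have hE0 : 0 < ε^(κ-1) := Real.rpow_pos_of_pos hε0 _
      have hP0 : 0 < ψ^(κ-1) := Real.rpow_pos_of_pos hψ0 _
      have hEP : ε^(κ-1) ≤ ψ^(κ-1) * (1/2) := by
        calc ε^(κ-1) ≤ (ψ * 2^(-(κ-1)⁻¹))^(κ-1) := Real.rpow_le_rpow hε0.le hεb hκ0.le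
        _ = ψ^(κ-1) * ((2:ℝ)^(-(κ-1)⁻¹))^(κ-1) := Real.mul_rpow hψ0.le hp2.le
        _ = ψ^(κ-1) * (1/2) := by
            rw [← Real.rpow_mul (by norm_num : (0:ℝ) ≤ 2),
              show -(κ-1)⁻¹ * (κ-1) = -1 by field_simp, Real.rpow_neg_one]
            norm_num
      have h2 : ψ^(1-κ) ≤ ε^(1-κ)/2 := by
        rw [show (1-κ) = -(κ-1) by ring, Real.rpow_neg hψ0.le, Real.rpow_neg hε0.le]
        have hh : 0 ≤ ψ^(κ-1) - 2*ε^(κ-1) := by linarith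
        nlinarith [inv_mul_cancel₀ hE0.ne', inv_mul_cancel₀ hP0.ne',
          mul_nonneg (mul_nonneg hh (inv_pos.2 hP0).le) (inv_pos.2 hE0).le,
          inv_pos.2 hE0, inv_pos.2 hP0]
      have h3 : ε^(1-κ)/2 ≤ ε^(1-κ) - (ε+ψ)^(1-κ) := by linarith
      have hstep : A * ε^(1-κ) = cA * (ε^(1-κ)/2 / (κ-1)) := by
        rw [hA]
        field_simp
      calc A * ε^(1-κ) = cA * (ε^(1-κ)/2 / (κ-1)) := hstep
      _ ≤ cA * ((ε^(1-κ) - (ε+ψ)^(1-κ))/(κ-1)) := by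
          apply mul_le_mul_of_nonneg_left _ hcA0.le
          exact div_le_div_of_nonneg_right h3 hκ0.le
    rcases le_or_gt 0 (α j₀) with hα0 | hα0
    · -- window [α j₀ - ψ, α j₀]
      have ha : -π < α j₀ - ψ := by linarith
      have hb : α j₀ ≤ π := hα2 j₀
      have hab : α j₀ - ψ ≤ α j₀ := by linarith
      have hwψ : ∀ θ ∈ Set.Icc (α j₀ - ψ) (α j₀), |θ - α j₀| ≤ ψ := by
        intro θ hθ
        rw [abs_le]
        exact ⟨by linarith [hθ.1], by linarith [hθ.2]⟩
      have hmono :=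
        intervalIntegral.integral_mono_on hab
          hconta.continuousOn.intervalIntegrable (hFint' _ _)
          (hwin (α j₀ - ψ) (α j₀) ha hb hab hwψ)
      have hcalc : (∫ θ in (α j₀ - ψ)..(α j₀), cA * (ε + |θ - α j₀|) ^ (-κ))
          = cA * ((ε^(1-κ) - (ε+ψ)^(1-κ))/(κ-1)) := by
        rw [intervalIntegral.integral_const_mul]
        congr 1
        have e1 : (∫ θ in (α j₀ - ψ)..(α j₀), (ε + |θ - α j₀|) ^ (-κ))
            = ∫ θ in (α j₀ - ψ)..(α j₀), (ε + (α j₀ - θ)) ^ (-κ) := by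
          apply intervalIntegral.integral_congr
          intro θ hθ
          rw [Set.uIcc_of_le hab] at hθ
          show (ε + |θ - α j₀|) ^ (-κ) = (ε + (α j₀ - θ)) ^ (-κ)
          rw [abs_sub_comm, abs_of_nonneg (by linarith [hθ.2])]
        rw [e1]
        have e2 : (∫ θ in (α j₀ - ψ)..(α j₀), (ε + (α j₀ - θ)) ^ (-κ))
            = ∫ u in (0:ℝ)..ψ, (ε + u) ^ (-κ) := by
          rw [intervalIntegral.integral_comp_sub_left (fun u => (ε + u) ^ (-κ)) (α j₀)]
          rw [sub_self, show α j₀ - (α j₀ - ψ) = ψ by ring]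
        rw [e2, L3one κ ε ψ hκ hε0 hψ0.le]
      calc A * ε^(1-κ) ≤ cA * ((ε^(1-κ) - (ε+ψ)^(1-κ))/(κ-1)) := hnum
      _ = ∫ θ in (α j₀ - ψ)..(α j₀), cA * (ε + |θ - α j₀|) ^ (-κ) := hcalc.symm
      _ ≤ ∫ θ in (α j₀ - ψ)..(α j₀), F θ := hmono
      _ ≤ ∫ θ in (-π)..π, F θ := hIcc _ _ (by linarith) hab hb
    · -- window [α j₀, α j₀ + ψ]
      have ha : -π < α j₀ := hα1 j₀
      have hb : α j₀ + ψ ≤ π := by linarith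
      have hab : α j₀ ≤ α j₀ + ψ := by linarith
      have hwψ : ∀ θ ∈ Set.Icc (α j₀) (α j₀ + ψ), |θ - α j₀| ≤ ψ := by
        intro θ hθ
        rw [abs_le]
        exact ⟨by linarith [hθ.1], by linarith [hθ.2]⟩
      have hmono :=
        intervalIntegral.integral_mono_on hab
          hconta.continuousOn.intervalIntegrable (hFint' _ _)
          (hwin (α j₀) (α j₀ + ψ) ha hb hab hwψ)
      have hcalc : (∫ θ in (α j₀)..(α j₀ + ψ), cA * (ε + |θ - α j₀|) ^ (-κ))
          = cA * ((ε^(1-κ) - (ε+ψ)^(1-κ))/(κ-1)) := by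
        rw [intervalIntegral.integral_const_mul]
        congr 1
        have e1 : (∫ θ in (α j₀)..(α j₀ + ψ), (ε + |θ - α j₀|) ^ (-κ))
            = ∫ θ in (α j₀)..(α j₀ + ψ), (ε + (θ - α j₀)) ^ (-κ) := by
          apply intervalIntegral.integral_congr
          intro θ hθ
          rw [Set.uIcc_of_le hab] at hθ
          show (ε + |θ - α j₀|) ^ (-κ) = (ε + (θ - α j₀)) ^ (-κ)
          rw [abs_of_nonneg (by linarith [hθ.1])]
        rw [e1]
        have e2 : (∫ θ in (α j₀)..(α j₀ + ψ), (ε + (θ - α j₀)) ^ (-κ))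
            = ∫ u in (0:ℝ)..ψ, (ε + u) ^ (-κ) := by
          rw [intervalIntegral.integral_comp_sub_right (fun u => (ε + u) ^ (-κ)) (α j₀)]
          rw [sub_self, show α j₀ + ψ - α j₀ = ψ by ring]
        rw [e2, L3one κ ε ψ hκ hε0 hψ0.le]
      calc A * ε^(1-κ) ≤ cA * ((ε^(1-κ) - (ε+ψ)^(1-κ))/(κ-1)) := hnum
      _ = ∫ θ in (α j₀)..(α j₀ + ψ), cA * (ε + |θ - α j₀|) ^ (-κ) := hcalc.symm
      _ ≤ ∫ θ in (α j₀)..(α j₀ + ψ), F θ := hmono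
      _ ≤ ∫ θ in (-π)..π, F θ := hIcc _ _ (le_of_lt ha) hab hb
  · -- upper bound
    rw [show -(κ-1) = 1-κ by ring]
    set T : Fin n → ℝ → ℝ := fun j θ =>
      (ε + π⁻¹*|θ - α j|) ^ (-κ) + (ε + π⁻¹*|θ - (α j + 2*π)|) ^ (-κ)
        + (ε + π⁻¹*|θ - (α j - 2*π)|) ^ (-κ) with hT
    have hTc : ∀ j, Continuous (T j) := by
      intro j
      exact ((Lcont' κ _ (by fun_prop) fun x => by positivity).add
        (Lcont' κ _ (by fun_prop) fun x => by positivity)).add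
        (Lcont' κ _ (by fun_prop) fun x => by positivity)
    have hT0 : ∀ j θ, 0 ≤ T j θ := by
      intro j θ
      have h1 : (0:ℝ) ≤ (ε + π⁻¹*|θ - α j|) ^ (-κ) := Real.rpow_nonneg (by positivity) _
      have h2 : (0:ℝ) ≤ (ε + π⁻¹*|θ - (α j + 2*π)|) ^ (-κ) := Real.rpow_nonneg (by positivity) _
      have h3 : (0:ℝ) ≤ (ε + π⁻¹*|θ - (α j - 2*π)|) ^ (-κ) := Real.rpow_nonneg (by positivity) _
      rw [hT]; dsimp only; linarith
    have hMc : Continuous fun θ => Kc * ∑ j, T j θ :=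
      continuous_const.mul (continuous_finset_sum _ fun j _ => hTc j)
    have hpt : ∀ θ ∈ Set.Icc (-π) π,
        ‖(∏ j, ((r : ℂ) * Complex.exp ((θ:ℂ) * Complex.I) - z j)) *
          g ((r:ℂ) * Complex.exp ((θ:ℂ) * Complex.I))‖ ^ (-κ) ≤ Kc * ∑ j, T j θ := by
      intro θ hθ
      obtain ⟨j', -, hj'⟩ := Finset.exists_min_image Finset.univ
        (fun j => ‖(r:ℂ) * Complex.exp ((θ:ℂ) * Complex.I) - z j‖)
        ⟨j₀, Finset.mem_univ _⟩
      have hothers : ∀ k ∈ Finset.univ.erase j',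
          δ ≤ ‖(r:ℂ) * Complex.exp ((θ:ℂ) * Complex.I) - z k‖ := by
        intro k hk
        obtain ⟨hkj, -⟩ := Finset.mem_erase.1 hk
        by_contra hlt
        push_neg at hlt
        have h1 := hj' k (Finset.mem_univ _)
        have h2 : ‖z j' - z k‖
            ≤ ‖z j' - ((r:ℂ) * Complex.exp ((θ:ℂ) * Complex.I))‖
              + ‖((r:ℂ) * Complex.exp ((θ:ℂ) * Complex.I)) - z k‖ :=
          norm_sub_le_norm_sub_add_norm_sub _ _ _
        have h3 : ‖z j' - ((r:ℂ) * Complex.exp ((θ:ℂ) * Complex.I))‖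
            = ‖((r:ℂ) * Complex.exp ((θ:ℂ) * Complex.I)) - z j'‖ :=
          norm_sub_rev _ _
        have h4 := hδ j' k (Ne.symm hkj)
        rw [h3] at h2
        linarith
      have hprod : δ^(n-1) * ‖(r:ℂ) * Complex.exp ((θ:ℂ) * Complex.I) - z j'‖
          ≤ ∏ j, ‖(r:ℂ) * Complex.exp ((θ:ℂ) * Complex.I) - z j‖ := by
        rw [← Finset.mul_prod_erase Finset.univ _ (Finset.mem_univ j'), mul_comm (δ^(n-1))]
        apply mul_le_mul_of_nonneg_left _ (hd_pos θ j').le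
        calc δ^(n-1) = ∏ _k ∈ Finset.univ.erase j', δ := by
              rw [Finset.prod_const, Finset.card_erase_of_mem (Finset.mem_univ _),
                Finset.card_univ, Fintype.card_fin]
        _ ≤ _ := Finset.prod_le_prod (fun k _ => hδ0.le) hothers
      have hNlow : (c₀ * δ^(n-1)) * ‖(r:ℂ) * Complex.exp ((θ:ℂ) * Complex.I) - z j'‖
          ≤ (∏ j, ‖(r:ℂ) * Complex.exp ((θ:ℂ) * Complex.I) - z j‖)
            * ‖g ((r:ℂ) * Complex.exp ((θ:ℂ) * Complex.I))‖ := by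
        have hmm := mul_le_mul hprod (hgw θ) hc₀.le
          (Finset.prod_nonneg fun j _ => (hd_pos θ j).le)
        calc (c₀ * δ^(n-1)) * ‖(r:ℂ) * Complex.exp ((θ:ℂ) * Complex.I) - z j'‖
            = (δ^(n-1) * ‖(r:ℂ) * Complex.exp ((θ:ℂ) * Complex.I) - z j'‖) * c₀ := by
              ring
        _ ≤ _ := hmm
      rw [hNeq θ]
      have hbase : 0 < (c₀*δ^(n-1))
          * ‖(r:ℂ) * Complex.exp ((θ:ℂ) * Complex.I) - z j'‖ :=
        mul_pos (mul_pos hc₀ (pow_pos hδ0 _)) (hd_pos θ j')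
      have step1 : ((∏ j, ‖(r:ℂ) * Complex.exp ((θ:ℂ) * Complex.I) - z j‖)
            * ‖g ((r:ℂ) * Complex.exp ((θ:ℂ) * Complex.I))‖) ^ (-κ)
          ≤ ((c₀*δ^(n-1))
            * ‖(r:ℂ) * Complex.exp ((θ:ℂ) * Complex.I) - z j'‖) ^ (-κ) :=
        Real.rpow_le_rpow_of_nonpos hbase hNlow (by linarith)
      rw [Real.mul_rpow (mul_pos hc₀ (pow_pos hδ0 _)).le (hd_pos θ j').le] at step1
      -- distance lower bounds at j'
      have huabs : |θ - α j'| ≤ 2*π := by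
        rw [abs_le]
        constructor
        · linarith [hθ.1, hα2 j']
        · linarith [hθ.2, hα1 j']
      have hdrot : ‖(r:ℂ) * Complex.exp ((θ:ℂ) * Complex.I) - z j'‖
          = ‖(r:ℂ) * Complex.exp (((θ - α j' : ℝ) : ℂ) * Complex.I) - 1‖ := by
        rw [hz_eq j', G2' r θ (α j')]
        norm_cast
      have hlow1 : ε ≤ ‖(r:ℂ) * Complex.exp ((θ:ℂ) * Complex.I) - z j'‖ := by
        rw [hdrot, hε]
        exact G3a' r (θ - α j') hr0.le hr1.le
      have hlow2 : π⁻¹ * min |θ - α j'| (2*π - |θ - α j'|)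
          ≤ ‖(r:ℂ) * Complex.exp ((θ:ℂ) * Complex.I) - z j'‖ := by
        rw [hdrot]
        exact G3b' r (θ - α j') hr12.le huabs
      have hm0 : 0 ≤ min |θ - α j'| (2*π - |θ - α j'|) := le_min (abs_nonneg _) (by linarith)
      have hb2 : 0 < (ε + π⁻¹ * min |θ - α j'| (2*π - |θ - α j'|))/2 := by positivity
      have step2 : (‖(r:ℂ) * Complex.exp ((θ:ℂ) * Complex.I) - z j'‖) ^ (-κ)
          ≤ 2^κ * (ε + π⁻¹ * min |θ - α j'| (2*π - |θ - α j'|)) ^ (-κ) := by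
        have hh := Real.rpow_le_rpow_of_nonpos hb2 (by linarith : (ε + π⁻¹ * min |θ - α j'| (2*π - |θ - α j'|))/2 ≤ ‖(r:ℂ) * Complex.exp ((θ:ℂ) * Complex.I) - z j'‖) (by linarith : -κ ≤ 0)
        rw [Real.div_rpow (by positivity) (by norm_num : (0:ℝ) ≤ 2),
          Real.rpow_neg (by norm_num : (0:ℝ) ≤ 2), div_inv_eq_mul] at hh
        linarith
      have step3 : (ε + π⁻¹ * min |θ - α j'| (2*π - |θ - α j'|)) ^ (-κ) ≤ T j' θ := by
        have t1 : (0:ℝ) ≤ (ε + π⁻¹*|θ - α j'|) ^ (-κ) := Real.rpow_nonneg (by positivity) _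
        have t2 : (0:ℝ) ≤ (ε + π⁻¹*|θ - (α j' + 2*π)|) ^ (-κ) := Real.rpow_nonneg (by positivity) _
        have t3 : (0:ℝ) ≤ (ε + π⁻¹*|θ - (α j' - 2*π)|) ^ (-κ) := Real.rpow_nonneg (by positivity) _
        rw [hT]; dsimp only
        rcases min_cases |θ - α j'| (2*π - |θ - α j'|) with ⟨h1, h2⟩ | ⟨h1, h2⟩
        · rw [h1]; linarith
        · rw [h1]
          rcases le_or_gt 0 (θ - α j') with hu0 | hu0
          · have hmeq : 2*π - |θ - α j'| = |θ - (α j' + 2*π)| := by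
              rw [abs_of_nonneg hu0,
                show θ - (α j' + 2*π) = -(2*π - (θ - α j')) by ring, abs_neg,
                abs_of_nonneg (by linarith [le_of_abs_le huabs, abs_of_nonneg hu0])]
            rw [hmeq]; linarith
          · have hmeq : 2*π - |θ - α j'| = |θ - (α j' - 2*π)| := by
              have hl : -(2*π) ≤ θ - α j' := neg_le_of_abs_le huabs
              rw [abs_of_neg hu0,
                show θ - (α j' - 2*π) = 2*π + (θ - α j') by ring,
                abs_of_nonneg (by linarith)]
              ring
            rw [hmeq]; linarith
      have step4 : T j' θ ≤ ∑ j, T j θ :=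
        Finset.single_le_sum (fun j _ => hT0 j θ) (Finset.mem_univ j')
      have hc2 : 0 ≤ (c₀ * δ^(n-1)) ^ (-κ) :=
        (Real.rpow_pos_of_pos (mul_pos hc₀ (pow_pos hδ0 _)) _).le
      have h2κ : (0:ℝ) ≤ 2^κ := (Real.rpow_pos_of_pos two_pos _).le
      calc ((∏ j, ‖(r:ℂ) * Complex.exp ((θ:ℂ) * Complex.I) - z j‖)
            * ‖g ((r:ℂ) * Complex.exp ((θ:ℂ) * Complex.I))‖) ^ (-κ)
          ≤ (c₀*δ^(n-1)) ^ (-κ)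
            * (‖(r:ℂ) * Complex.exp ((θ:ℂ) * Complex.I) - z j'‖) ^ (-κ) := step1
      _ ≤ (c₀*δ^(n-1)) ^ (-κ)
            * (2^κ * (ε + π⁻¹ * min |θ - α j'| (2*π - |θ - α j'|)) ^ (-κ)) :=
          mul_le_mul_of_nonneg_left step2 hc2
      _ = Kc * (ε + π⁻¹ * min |θ - α j'| (2*π - |θ - α j'|)) ^ (-κ) := by rw [hKc]; ring
      _ ≤ Kc * T j' θ := mul_le_mul_of_nonneg_left step3 hKc0.le
      _ ≤ Kc * ∑ j, T j θ := mul_le_mul_of_nonneg_left step4 hKc0.le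
    have hmono : (∫ θ in (-π)..π,
          ‖(∏ j, ((r : ℂ) * Complex.exp ((θ:ℂ) * Complex.I) - z j)) *
            g ((r:ℂ) * Complex.exp ((θ:ℂ) * Complex.I))‖ ^ (-κ))
        ≤ ∫ θ in (-π)..π, Kc * ∑ j, T j θ :=
      intervalIntegral.integral_mono_on (by linarith) hFint
        hMc.continuousOn.intervalIntegrable hpt
    have hti : ∀ a : ℝ, IntervalIntegrable (fun θ => (ε + π⁻¹*|θ - a|) ^ (-κ)) volume (-π) π :=
      fun a => (Lcont' κ _ (by fun_prop) fun x => by positivity).continuousOn.intervalIntegrable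
    have hTsum : ∀ j : Fin n, (∫ θ in (-π)..π, T j θ) ≤ 3 * (2 * ε^(1-κ) / (π⁻¹*(κ-1))) := by
      intro j
      have e : (∫ θ in (-π)..π, T j θ)
          = (∫ θ in (-π)..π, (ε + π⁻¹*|θ - α j|) ^ (-κ))
            + (∫ θ in (-π)..π, (ε + π⁻¹*|θ - (α j + 2*π)|) ^ (-κ))
            + (∫ θ in (-π)..π, (ε + π⁻¹*|θ - (α j - 2*π)|) ^ (-κ)) := by
        rw [hT]
        dsimp only
        rw [intervalIntegral.integral_add ((hti _).add (hti _)) (hti _),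
          intervalIntegral.integral_add (hti _) (hti _)]
      rw [e]
      have b1 := L4' κ ε π⁻¹ (α j) hκ hε0 (inv_pos.2 hπ)
      have b2 := L4' κ ε π⁻¹ (α j + 2*π) hκ hε0 (inv_pos.2 hπ)
      have b3 := L4' κ ε π⁻¹ (α j - 2*π) hκ hε0 (inv_pos.2 hπ)
      linarith
    have hsum2 : (∑ j, ∫ θ in (-π)..π, T j θ) ≤ n * (3 * (2 * ε^(1-κ) / (π⁻¹*(κ-1)))) := by
      have := Finset.sum_le_card_nsmul Finset.univ (fun j => ∫ θ in (-π)..π, T j θ)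
        (3 * (2 * ε^(1-κ) / (π⁻¹*(κ-1)))) (fun j _ => hTsum j)
      rwa [Finset.card_univ, Fintype.card_fin, nsmul_eq_mul] at this
    calc (∫ θ in (-π)..π,
          ‖(∏ j, ((r : ℂ) * Complex.exp ((θ:ℂ) * Complex.I) - z j)) *
            g ((r:ℂ) * Complex.exp ((θ:ℂ) * Complex.I))‖ ^ (-κ))
        ≤ ∫ θ in (-π)..π, Kc * ∑ j, T j θ := hmono
    _ = Kc * ∑ j, ∫ θ in (-π)..π, T j θ := by
        rw [intervalIntegral.integral_const_mul,
          intervalIntegral.integral_finset_sum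
            (fun j _ => (hTc j).continuousOn.intervalIntegrable)]
    _ ≤ Kc * (n * (3 * (2 * ε^(1-κ) / (π⁻¹*(κ-1))))) :=
        mul_le_mul_of_nonneg_left hsum2 hKc0.le
    _ = B0 * ε^(1-κ) := by rw [hB0]; ring
    _ ≤ B * ε^(1-κ) :=
        mul_le_mul_of_nonneg_right (le_max_right _ _) (Real.rpow_nonneg hε0.le _)
end

section
/- For the Koebe function κ(z) = z/(1-z)² and any real τ > 1/3, the integral means spectrum β_κ(τ) := limsup_{r→1⁻} [log ∫_{-π}^{π} |κ'(re^{iθ})|^τ dθ] / |log(1-r)| equals 3τ - 1. -/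
open Real MeasureTheory

/-- The integral means spectrum of `f` at real exponent `τ`. -/
noncomputable def integralMeansSpectrum (f : ℂ → ℂ) (τ : ℝ) : ℝ :=
  Filter.limsup
    (fun r : ℝ =>
      Real.log (∫ θ in (-π)..π, ‖deriv f (r * Complex.exp (θ * Complex.I))‖ ^ τ) /
        |Real.log (1 - r)|)
    (nhdsWithin 1 (Set.Iio 1))

open Filter


lemma koebe_deriv (z : ℂ) (hz : z ≠ 1) :
    deriv (fun z : ℂ => z / (1 - z) ^ 2) z = (1 + z) / (1 - z) ^ 3 := by
  have h1 : (1 : ℂ) - z ≠ 0 := sub_ne_zero.2 (Ne.symm hz)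
  have hd : HasDerivAt (fun z : ℂ => z / (1 - z) ^ 2) ((1 + z) / (1 - z) ^ 3) z := by
    have h := (hasDerivAt_id z).div (((hasDerivAt_id z).const_sub 1).pow 2)
      (pow_ne_zero 2 h1)
    refine HasDerivAt.congr_deriv h ?_
    simp only [Pi.pow_apply, id]
    field_simp
    ring
  exact hd.deriv

lemma normSq_one_sub (r θ : ℝ) :
    ‖1 - (r : ℂ) * Complex.exp (θ * Complex.I)‖ ^ 2 = (1 - r) ^ 2 + 2 * r * (1 - Real.cos θ) := by
  have hre : ((r : ℂ) * Complex.exp (θ * Complex.I)).re = r * Real.cos θ := by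
    simp [Complex.exp_mul_I, Complex.ext_iff, Complex.cos_ofReal_re, Complex.sin_ofReal_re]
  have him : ((r : ℂ) * Complex.exp (θ * Complex.I)).im = r * Real.sin θ := by
    simp [Complex.exp_mul_I, Complex.ext_iff, Complex.cos_ofReal_re, Complex.sin_ofReal_re]
  rw [Complex.sq_norm, Complex.normSq_apply]
  simp only [Complex.sub_re, Complex.sub_im, Complex.one_re, Complex.one_im, hre, him]
  linear_combination r^2 * Real.sin_sq_add_cos_sq θ

lemma half_angle (θ : ℝ) : 1 - Real.cos θ = 2 * Real.sin (θ/2) ^ 2 := by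
  have h := Real.cos_two_mul (θ/2)
  have h2 := Real.sin_sq_add_cos_sq (θ/2)
  have : Real.cos (2 * (θ/2)) = Real.cos θ := by rw [show 2*(θ/2:ℝ) = θ by ring]
  nlinarith

lemma z_re (r θ : ℝ) : ((r : ℂ) * Complex.exp (θ * Complex.I)).re = r * Real.cos θ := by
  simp [Complex.exp_mul_I, Complex.ext_iff, Complex.cos_ofReal_re, Complex.sin_ofReal_re]

lemma norm_z (r θ : ℝ) (hr : 0 ≤ r) : ‖(r : ℂ) * Complex.exp (θ * Complex.I)‖ = r := by
  simp [map_mul, Complex.norm_exp_ofReal_mul_I,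
    abs_of_nonneg hr]

lemma bound1 (r θ : ℝ) (hr : 0 ≤ r) (hr1 : r ≤ 1) :
    1 - r ≤ ‖1 - (r : ℂ) * Complex.exp (θ * Complex.I)‖ := by
  have := norm_sub_norm_le (1 : ℂ) ((r : ℂ) * Complex.exp (θ * Complex.I))
  rwa [norm_one, norm_z r θ hr] at this

lemma bound2 (r θ : ℝ) (hr : 1/2 ≤ r) (hθ : |θ| ≤ π) :
    |θ| / π ≤ ‖1 - (r : ℂ) * Complex.exp (θ * Complex.I)‖ := by
  have hπ := Real.pi_pos
  have ha : (0:ℝ) ≤ |θ| / π := by positivity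
  have hsin : |θ| / π ≤ Real.sin (|θ|/2) := by
    have := Real.mul_le_sin (x := |θ|/2) (by positivity) (by linarith)
    calc |θ| / π = 2 / π * (|θ|/2) := by field_simp
    _ ≤ Real.sin (|θ|/2) := this
  have hsq2 : Real.sin (|θ|/2) ^ 2 = Real.sin (θ/2) ^ 2 := by
    rcases abs_cases θ with ⟨h, _⟩ | ⟨h, _⟩ <;> rw [h] <;> simp [neg_div, Real.sin_neg]
  have hsq : (|θ| / π) ^ 2 ≤ ‖1 - (r : ℂ) * Complex.exp (θ * Complex.I)‖ ^ 2 := by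
    rw [normSq_one_sub, half_angle]
    nlinarith [sq_nonneg (1 - r)]
  calc |θ| / π = Real.sqrt ((|θ|/π)^2) := (Real.sqrt_sq ha).symm
  _ ≤ Real.sqrt (‖1 - (r : ℂ) * Complex.exp (θ * Complex.I)‖ ^ 2) := Real.sqrt_le_sqrt hsq
  _ = _ := Real.sqrt_sq (norm_nonneg _)

lemma bound3 (r θ : ℝ) (hr : 0 ≤ r) (hr1 : r ≤ 1) (hθ : |θ| ≤ 1 - r) :
    ‖1 - (r : ℂ) * Complex.exp (θ * Complex.I)‖ ≤ 2 * (1 - r) := by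
  have hs : 0 ≤ 1 - r := by linarith
  have hsin : Real.sin (θ/2) ^ 2 ≤ (θ/2)^2 := by
    have := Real.abs_sin_le_abs (x := θ/2)
    nlinarith [abs_nonneg (θ/2), abs_nonneg (Real.sin (θ/2)), sq_abs (θ/2), sq_abs (Real.sin (θ/2))]
  have hsq : ‖1 - (r : ℂ) * Complex.exp (θ * Complex.I)‖ ^ 2 ≤ (2*(1-r))^2 := by
    have hθ2 : θ^2 ≤ (1-r)^2 := by
      rw [← sq_abs θ]; exact pow_le_pow_left₀ (abs_nonneg θ) hθ 2
    rw [normSq_one_sub, half_angle]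
    nlinarith [sq_nonneg (1-r)]
  calc ‖1 - (r : ℂ) * Complex.exp (θ * Complex.I)‖
      = Real.sqrt (‖1 - (r : ℂ) * Complex.exp (θ * Complex.I)‖ ^ 2) :=
        (Real.sqrt_sq (norm_nonneg _)).symm
  _ ≤ Real.sqrt ((2*(1-r))^2) := Real.sqrt_le_sqrt hsq
  _ = 2*(1-r) := Real.sqrt_sq (by linarith)

lemma bound4 (r θ : ℝ) (hr : 0 ≤ r) (hr1 : r ≤ 1) :
    ‖1 + (r : ℂ) * Complex.exp (θ * Complex.I)‖ ≤ 2 := by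
  have := norm_add_le (1 : ℂ) ((r : ℂ) * Complex.exp (θ * Complex.I))
  rw [norm_one, norm_z r θ hr] at this
  linarith

lemma bound5 (r θ : ℝ) (hr : 0 ≤ r) (hθ : |θ| ≤ 1/2) :
    1 ≤ ‖1 + (r : ℂ) * Complex.exp (θ * Complex.I)‖ := by
  have hπ := Real.pi_gt_three
  have hcos : 0 ≤ Real.cos θ := by
    apply Real.cos_nonneg_of_mem_Icc
    constructor <;> [linarith [neg_abs_le θ]; linarith [le_abs_self θ]]
  have hre : (1 + (r : ℂ) * Complex.exp (θ * Complex.I)).re = 1 + r * Real.cos θ := by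
    simp [Complex.add_re, z_re]
  calc (1:ℝ) ≤ 1 + r * Real.cos θ := by nlinarith
  _ = (1 + (r : ℂ) * Complex.exp (θ * Complex.I)).re := hre.symm
  _ ≤ |(1 + (r : ℂ) * Complex.exp (θ * Complex.I)).re| := le_abs_self _
  _ ≤ ‖1 + (r : ℂ) * Complex.exp (θ * Complex.I)‖ := Complex.abs_re_le_norm _

lemma rpow_nat_mul (x : ℝ) (hx : 0 ≤ x) (t : ℝ) : (x ^ 3) ^ t = x ^ (3 * t) := by
  rw [← Real.rpow_natCast x 3, ← Real.rpow_mul hx]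
  norm_num

set_option maxHeartbeats 1000000 in
lemma koebe_integral_bounds (τ : ℝ) (hτ : 1/3 < τ) :
    ∀ r : ℝ, 1/2 ≤ r → r < 1 →
      (2:ℝ)^(1-3*τ) * (1 - r) ^ (1 - 3*τ) ≤
        (∫ θ in (-π)..π,
          ‖deriv (fun z : ℂ => z / (1 - z) ^ 2) (r * Complex.exp (θ * Complex.I))‖ ^ τ) ∧
      (∫ θ in (-π)..π,
          ‖deriv (fun z : ℂ => z / (1 - z) ^ 2) (r * Complex.exp (θ * Complex.I))‖ ^ τ) ≤
        (2*(2:ℝ)^τ + 2*(2*π^3)^τ/(3*τ-1)) * (1 - r) ^ (1 - 3*τ) := by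
  have hπ := Real.pi_pos
  have hπ3 := Real.pi_gt_three
  have hτ0 : 0 < τ := by linarith
  have h3τ : 1 < 3*τ := by linarith
  intro r hr hr1
  set s : ℝ := 1 - r with hsdef
  have hs0 : 0 < s := by simp only [hsdef]; linarith
  have hs2 : s ≤ 1/2 := by simp only [hsdef]; linarith
  have hsπ : s ≤ π := by linarith
  have hr0 : (0:ℝ) ≤ r := by linarith
  set G : ℝ → ℝ := fun θ =>
    (‖1 + (r:ℂ) * Complex.exp (θ * Complex.I)‖ /
      ‖1 - (r:ℂ) * Complex.exp (θ * Complex.I)‖ ^ 3) ^ τ with hGdef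
  have hden : ∀ θ : ℝ, 0 < ‖1 - (r:ℂ) * Complex.exp (θ * Complex.I)‖ :=
    fun θ => lt_of_lt_of_le hs0 (bound1 r θ hr0 hr1.le)
  have hinteq : (∫ θ in (-π)..π,
      ‖deriv (fun z : ℂ => z / (1 - z) ^ 2) (r * Complex.exp (θ * Complex.I))‖ ^ τ)
      = ∫ θ in (-π)..π, G θ := by
    apply intervalIntegral.integral_congr
    intro θ _
    have hz1 : (r:ℂ) * Complex.exp (θ * Complex.I) ≠ 1 := by
      intro h
      have h2 := norm_z r θ hr0
      rw [h, norm_one] at h2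
      linarith
    simp only [hGdef]
    rw [koebe_deriv _ hz1, norm_div, norm_pow]
  rw [hinteq]
  have hzc : Continuous fun θ : ℝ => (r:ℂ) * Complex.exp (θ * Complex.I) := by
    apply continuous_const.mul
    exact Complex.continuous_exp.comp (Complex.continuous_ofReal.mul continuous_const)
  have hGc : Continuous G := by
    apply Continuous.rpow_const
    · exact (continuous_const.add hzc).norm.div ((continuous_const.sub hzc).norm.pow 3)
        (fun θ => pow_ne_zero 3 (ne_of_gt (hden θ)))
    · exact fun x => Or.inr hτ0.le
  have hGnn : ∀ θ, 0 ≤ G θ := fun θ =>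
    Real.rpow_nonneg (div_nonneg (norm_nonneg _) (by positivity)) τ
  have hint : ∀ a b : ℝ, IntervalIntegrable G volume a b :=
    fun a b => hGc.intervalIntegrable a b
  have hsplit : (∫ θ in (-π)..π, G θ)
      = (∫ θ in (-π)..(-s), G θ) + (∫ θ in (-s)..s, G θ) + (∫ θ in s..π, G θ) := by
    rw [intervalIntegral.integral_add_adjacent_intervals (hint _ _) (hint _ _),
      intervalIntegral.integral_add_adjacent_intervals (hint _ _) (hint _ _)]
  -- abbreviations for rpow algebra
  have h2s : (0:ℝ) < 2*s := by linarith
  -- key rpow identities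
  have e1 : (2*s) * ((1/(2*s)^3)^τ) = (2:ℝ)^(1-3*τ) * s^(1-3*τ) := by
    rw [one_div, Real.inv_rpow (by positivity), rpow_nat_mul _ h2s.le,
      ← Real.rpow_neg h2s.le, ← Real.mul_rpow (by norm_num) hs0.le]
    nth_rewrite 1 [show (2*s) = (2*s)^(1:ℝ) by rw [Real.rpow_one]]
    rw [← Real.rpow_add h2s]
    ring_nf
  have e2 : (2*s) * ((2/s^3)^τ) = 2*(2:ℝ)^τ * s^(1-3*τ) := by
    rw [Real.div_rpow (by norm_num) (by positivity), rpow_nat_mul _ hs0.le, div_eq_mul_inv,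
      ← Real.rpow_neg hs0.le]
    nth_rewrite 1 [show s = s^(1:ℝ) by rw [Real.rpow_one]]
    rw [mul_mul_mul_comm, ← Real.rpow_add hs0]
    ring_nf
  -- lower bound
  constructor
  · have hc : ∀ θ ∈ Set.Icc (-s) s, (1/(2*s)^3 : ℝ)^τ ≤ G θ := by
      intro θ hθ
      have habs : |θ| ≤ s := abs_le.2 ⟨hθ.1, hθ.2⟩
      have h5 := bound5 r θ hr0 (habs.trans hs2)
      have h3 := bound3 r θ hr0 hr1.le habs
      apply Real.rpow_le_rpow (by positivity) ?_ hτ0.le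
      have hd := hden θ
      have hpow : ‖1 - (r:ℂ) * Complex.exp (θ * Complex.I)‖^3 ≤ (2*s)^3 :=
        pow_le_pow_left₀ (norm_nonneg _) h3 3
      rw [div_le_div_iff₀ (by positivity) (by positivity)]
      nlinarith [pow_pos hd 3, pow_pos h2s 3]
    have hmono := intervalIntegral.integral_mono_on (by linarith : -s ≤ s)
      (intervalIntegrable_const) (hint _ _) hc
    rw [intervalIntegral.integral_const, smul_eq_mul] at hmono
    have h1 : 0 ≤ ∫ θ in (-π)..(-s), G θ :=
      intervalIntegral.integral_nonneg (by linarith) (fun x _ => hGnn x)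
    have h2 : 0 ≤ ∫ θ in s..π, G θ :=
      intervalIntegral.integral_nonneg (by linarith) (fun x _ => hGnn x)
    have : (s - -s) * ((1/(2*s)^3 : ℝ)^τ) = (2*s) * ((1/(2*s)^3)^τ) := by ring
    rw [this, e1] at hmono
    rw [hsplit]
    linarith
  -- upper bound
  · -- general pointwise bound via |θ|
    have hGabs : ∀ θ : ℝ, θ ≠ 0 → |θ| ≤ π → G θ ≤ (2*π^3)^τ * |θ|^(-(3*τ)) := by
      intro θ hθ0 hθπ
      have habs : 0 < |θ| := abs_pos.2 hθ0
      have h2b := bound2 r θ hr hθπ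
      have h4 := bound4 r θ hr0 hr1.le
      have hd := hden θ
      have step1 : G θ ≤ (2 / (|θ|/π)^3)^τ := by
        apply Real.rpow_le_rpow (div_nonneg (norm_nonneg _) (by positivity)) ?_ hτ0.le
        rw [div_le_div_iff₀ (by positivity) (by positivity)]
        have hpow : (|θ|/π)^3 ≤ ‖1 - (r:ℂ) * Complex.exp (θ * Complex.I)‖^3 :=
          pow_le_pow_left₀ (by positivity) h2b 3
        nlinarith [pow_pos hd 3, pow_pos (show (0:ℝ) < |θ|/π by positivity) 3]
      have step2 : (2 / (|θ|/π)^3 : ℝ)^τ = (2*π^3)^τ * |θ|^(-(3*τ)) := by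
        rw [show (2:ℝ)/(|θ|/π)^3 = (2*π^3)/|θ|^3 by field_simp]
        rw [Real.div_rpow (by positivity) (by positivity), rpow_nat_mul _ habs.le,
          div_eq_mul_inv, ← Real.rpow_neg habs.le]
      rw [step2] at step1
      exact step1
    -- middle piece
    have hcu : ∀ θ ∈ Set.Icc (-s) s, G θ ≤ (2/s^3 : ℝ)^τ := by
      intro θ _
      apply Real.rpow_le_rpow (div_nonneg (norm_nonneg _) (by positivity)) ?_ hτ0.le
      have h1b := bound1 r θ hr0 hr1.le
      have h4 := bound4 r θ hr0 hr1.le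
      have hd := hden θ
      rw [div_le_div_iff₀ (by positivity) (by positivity)]
      have hpow : s^3 ≤ ‖1 - (r:ℂ) * Complex.exp (θ * Complex.I)‖^3 :=
        pow_le_pow_left₀ hs0.le h1b 3
      nlinarith [pow_pos hd 3, pow_pos hs0 3]
    have hmid := intervalIntegral.integral_mono_on (by linarith : -s ≤ s)
      (hint _ _) (intervalIntegrable_const) hcu
    rw [intervalIntegral.integral_const, smul_eq_mul] at hmid
    have hmid' : (∫ θ in (-s)..s, G θ) ≤ 2*(2:ℝ)^τ * s^(1-3*τ) := by
      rw [← e2]; calc (∫ θ in (-s)..s, G θ) ≤ (s - -s) * ((2/s^3)^τ) := hmid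
      _ = (2*s) * ((2/s^3)^τ) := by ring
    -- integral of the power bound on [s, π]
    have hrpowint : ∫ θ in s..π, (2*π^3:ℝ)^τ * θ^(-(3*τ))
        = (2*π^3)^τ * ((π^(1-3*τ) - s^(1-3*τ))/(1-3*τ)) := by
      rw [intervalIntegral.integral_const_mul, integral_rpow]
      · rw [show -(3*τ)+1 = 1-3*τ by ring]
      · right
        constructor
        · intro h; linarith
        · rw [Set.uIcc_of_le hsπ]
          intro h
          exact absurd h.1 (by linarith)
    have hbnd : (2*π^3:ℝ)^τ * ((π^(1-3*τ) - s^(1-3*τ))/(1-3*τ))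
        ≤ (2*π^3)^τ * s^(1-3*τ)/(3*τ-1) := by
      have hππ : (0:ℝ) < π^(1-3*τ) := Real.rpow_pos_of_pos hπ _
      have hC : (0:ℝ) < (2*π^3:ℝ)^τ := Real.rpow_pos_of_pos (by positivity) _
      have heq : (π^(1-3*τ) - s^(1-3*τ))/(1-3*τ) = (s^(1-3*τ) - π^(1-3*τ))/(3*τ-1) := by
        rw [div_eq_div_iff (by linarith) (by linarith)]; ring
      rw [heq, mul_div_assoc]
      apply mul_le_mul_of_nonneg_left _ hC.le
      exact (div_le_div_iff_of_pos_right (by linarith)).2 (by linarith)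
    have hright : (∫ θ in s..π, G θ) ≤ (2*π^3)^τ * s^(1-3*τ)/(3*τ-1) := by
      have hGb : ∀ θ ∈ Set.Icc s π, G θ ≤ (2*π^3:ℝ)^τ * θ^(-(3*τ)) := by
        intro θ hθ
        have h0 : 0 < θ := lt_of_lt_of_le hs0 hθ.1
        have h := hGabs θ (ne_of_gt h0) (by rw [abs_of_pos h0]; exact hθ.2)
        rwa [abs_of_pos h0] at h
      have hib : IntervalIntegrable (fun θ : ℝ => (2*π^3:ℝ)^τ * θ^(-(3*τ))) volume s π := by
        apply ContinuousOn.intervalIntegrable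
        apply ContinuousOn.mul continuousOn_const
        apply ContinuousOn.rpow_const continuousOn_id
        intro x hx
        rw [Set.uIcc_of_le hsπ] at hx
        exact Or.inl (ne_of_gt (lt_of_lt_of_le hs0 hx.1))
      have hm := intervalIntegral.integral_mono_on hsπ (hint _ _) hib hGb
      rw [hrpowint] at hm
      linarith [hbnd]
    have hleft : (∫ θ in (-π)..(-s), G θ) ≤ (2*π^3)^τ * s^(1-3*τ)/(3*τ-1) := by
      have hGb : ∀ θ ∈ Set.Icc (-π) (-s), G θ ≤ (2*π^3:ℝ)^τ * (-θ)^(-(3*τ)) := by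
        intro θ hθ
        have h0 : θ < 0 := lt_of_le_of_lt hθ.2 (by linarith)
        have h := hGabs θ (ne_of_lt h0) (by rw [abs_of_neg h0]; linarith [hθ.1])
        rwa [abs_of_neg h0] at h
      have hib : IntervalIntegrable (fun θ : ℝ => (2*π^3:ℝ)^τ * (-θ)^(-(3*τ)))
          volume (-π) (-s) := by
        apply ContinuousOn.intervalIntegrable
        apply ContinuousOn.mul continuousOn_const
        apply ContinuousOn.rpow_const continuous_neg.continuousOn
        intro x hx
        rw [Set.uIcc_of_le (by linarith : -π ≤ -s)] at hx
        exact Or.inl (by have := hx.2; intro h; rw [neg_eq_zero] at h; linarith)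
      have hm := intervalIntegral.integral_mono_on (by linarith : -π ≤ -s)
        (hint _ _) hib hGb
      have hcn : (∫ θ in (-π)..(-s), (2*π^3:ℝ)^τ * (-θ)^(-(3*τ)))
          = ∫ θ in s..π, (2*π^3:ℝ)^τ * θ^(-(3*τ)) := by
        have h := intervalIntegral.integral_comp_neg
          (a := -π) (b := -s) (fun t : ℝ => (2*π^3:ℝ)^τ * t^(-(3*τ)))
        rw [neg_neg, neg_neg] at h
        exact h
      rw [hcn, hrpowint] at hm
      linarith [hbnd]
    rw [hsplit]
    have hc2 : (2*(2:ℝ)^τ + 2*(2*π^3)^τ/(3*τ-1)) * s^(1-3*τ)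
        = 2*(2:ℝ)^τ * s^(1-3*τ)
          + ((2*π^3)^τ * s^(1-3*τ)/(3*τ-1) + (2*π^3)^τ * s^(1-3*τ)/(3*τ-1)) := by
      field_simp
      ring
    linarith [hmid', hright, hleft]

theorem koebe_spectrum (τ : ℝ) (hτ : 1 / 3 < τ) :
    integralMeansSpectrum (fun z : ℂ => z / (1 - z) ^ 2) τ = 3 * τ - 1 := by
  have hπ := Real.pi_pos
  have h3τ : 1 < 3*τ := by linarith
  set c₁ : ℝ := (2:ℝ)^(1-3*τ) with hc₁def
  set c₂ : ℝ := 2*(2:ℝ)^τ + 2*(2*π^3)^τ/(3*τ-1) with hc₂def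
  have hc₁ : 0 < c₁ := Real.rpow_pos_of_pos two_pos _
  have hc₂ : 0 < c₂ := by
    have h1 : (0:ℝ) < (2:ℝ)^τ := Real.rpow_pos_of_pos two_pos _
    have h2 : (0:ℝ) < (2*π^3:ℝ)^τ := Real.rpow_pos_of_pos (by positivity) _
    have h3 : (0:ℝ) < 3*τ-1 := by linarith
    positivity
  unfold integralMeansSpectrum
  apply Filter.Tendsto.limsup_eq
  have hlogtop : Tendsto (fun r : ℝ => -Real.log (1-r))
      (nhdsWithin 1 (Set.Iio 1)) atTop := by
    have h1 : Tendsto (fun r : ℝ => 1 - r) (nhdsWithin 1 (Set.Iio 1))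
        (nhdsWithin 0 (Set.Ioi 0)) := by
      rw [tendsto_nhdsWithin_iff]
      constructor
      · apply Filter.Tendsto.mono_left ?_ nhdsWithin_le_nhds
        have hcont : Continuous fun r : ℝ => 1 - r := by continuity
        simpa using hcont.tendsto 1
      · filter_upwards [self_mem_nhdsWithin] with r hr
        simp only [Set.mem_Iio] at hr
        simp only [Set.mem_Ioi]
        linarith
    have h2 := Real.tendsto_log_nhdsGT_zero.comp h1
    exact Filter.tendsto_neg_atTop_iff.2 h2
  have hzero₁ : Tendsto (fun r : ℝ => Real.log c₁ / (-Real.log (1-r)))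
      (nhdsWithin 1 (Set.Iio 1)) (nhds 0) := tendsto_const_nhds.div_atTop hlogtop
  have hzero₂ : Tendsto (fun r : ℝ => Real.log c₂ / (-Real.log (1-r)))
      (nhdsWithin 1 (Set.Iio 1)) (nhds 0) := tendsto_const_nhds.div_atTop hlogtop
  have hCmem : Set.Ioo (1/2 : ℝ) 1 ∈ nhdsWithin 1 (Set.Iio 1) :=
    Ioo_mem_nhdsLT_of_mem (by norm_num : (1:ℝ) ∈ Set.Ioc (1/2) 1)
  apply tendsto_of_tendsto_of_tendsto_of_le_of_le'
    (g := fun r : ℝ => (3*τ-1) + Real.log c₁ / (-Real.log (1-r)))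
    (h := fun r : ℝ => (3*τ-1) + Real.log c₂ / (-Real.log (1-r)))
  · simpa using tendsto_const_nhds.add hzero₁
  · simpa using tendsto_const_nhds.add hzero₂
  · filter_upwards [hCmem] with r hr
    obtain ⟨hr1, hr2⟩ := hr
    have hs0 : 0 < 1 - r := by linarith
    have hs1 : 1 - r < 1 := by linarith
    have hlneg : Real.log (1-r) < 0 := Real.log_neg hs0 hs1
    have habs : |Real.log (1-r)| = -Real.log (1-r) := abs_of_neg hlneg
    have hlne : Real.log (1-r) ≠ 0 := ne_of_lt hlneg
    obtain ⟨hlo, hhi⟩ := koebe_integral_bounds τ hτ r hr1.le hr2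
    have hIpos : 0 < (∫ θ in (-π)..π,
        ‖deriv (fun z : ℂ => z / (1 - z) ^ 2) (r * Complex.exp (θ * Complex.I))‖ ^ τ) :=
      lt_of_lt_of_le (by positivity) hlo
    have hloglo : Real.log c₁ + (1-3*τ) * Real.log (1-r) ≤
        Real.log (∫ θ in (-π)..π,
          ‖deriv (fun z : ℂ => z / (1 - z) ^ 2) (r * Complex.exp (θ * Complex.I))‖ ^ τ) := by
      have h := Real.log_le_log (by positivity) hlo
      rwa [Real.log_mul (ne_of_gt hc₁) (ne_of_gt (Real.rpow_pos_of_pos hs0 _)),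
        Real.log_rpow hs0] at h
    rw [habs]
    rw [le_div_iff₀ (by linarith)]
    calc ((3*τ-1) + Real.log c₁ / (-Real.log (1-r))) * (-Real.log (1-r))
        = Real.log c₁ + (1-3*τ) * Real.log (1-r) := by
          field_simp [hlne]
          ring
    _ ≤ _ := hloglo
  · filter_upwards [hCmem] with r hr
    obtain ⟨hr1, hr2⟩ := hr
    have hs0 : 0 < 1 - r := by linarith
    have hs1 : 1 - r < 1 := by linarith
    have hlneg : Real.log (1-r) < 0 := Real.log_neg hs0 hs1
    have habs : |Real.log (1-r)| = -Real.log (1-r) := abs_of_neg hlneg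
    have hlne : Real.log (1-r) ≠ 0 := ne_of_lt hlneg
    obtain ⟨hlo, hhi⟩ := koebe_integral_bounds τ hτ r hr1.le hr2
    have hIpos : 0 < (∫ θ in (-π)..π,
        ‖deriv (fun z : ℂ => z / (1 - z) ^ 2) (r * Complex.exp (θ * Complex.I))‖ ^ τ) :=
      lt_of_lt_of_le (by positivity) hlo
    have hloghi : Real.log (∫ θ in (-π)..π,
          ‖deriv (fun z : ℂ => z / (1 - z) ^ 2) (r * Complex.exp (θ * Complex.I))‖ ^ τ) ≤
        Real.log c₂ + (1-3*τ) * Real.log (1-r) := by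
      have h := Real.log_le_log hIpos hhi
      rwa [Real.log_mul (ne_of_gt hc₂) (ne_of_gt (Real.rpow_pos_of_pos hs0 _)),
        Real.log_rpow hs0] at h
    rw [habs]
    rw [div_le_iff₀ (by linarith)]
    calc Real.log (∫ θ in (-π)..π,
          ‖deriv (fun z : ℂ => z / (1 - z) ^ 2) (r * Complex.exp (θ * Complex.I))‖ ^ τ)
        ≤ Real.log c₂ + (1-3*τ) * Real.log (1-r) := hloghi
    _ = ((3*τ-1) + Real.log c₂ / (-Real.log (1-r))) * (-Real.log (1-r)) := by
          field_simp [hlne]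
          ring
end
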